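/- Let A₁ ∈ ℂ^{M₁×N₁} and A₂ ∈ ℂ^{M₂×N₂}, and let A = A₁ ⊗ A₂ act on 3-level block vectors in ℂ^{N₁'·N₂'·N₃'} where N₁ = N₁'N₂' and N₂ = N₃'. Then for any tuple s = (s₁,s₂,s₃) of positive integers with s₁ ≤ N₁', s₂ ≤ N₂', s₃ ≤ N₃', the hierarchical restricted isometry constant satisfies δ_{(s₁,s₂,s₃)}(A₁ ⊗ A₂) ≤ (1 + δ_{(s₁,s₂)}(A₁))(1 + δ_{s₃}(A₂)) − 1, where δ_{(s₁,s₂)}(A₁) is the 2-level HiRIP constant of A₁ viewed as acting on 2-level block vectors in ℂ^{N₁'·N₂'}. -/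

import Mathlib

open scoped Classical

noncomputable section

/-- A vector is `s`-sparse if at most `s` of its entries are nonzero. -/
def Sparse {ι : Type*} [Fintype ι] (s : ℕ) (x : ι → ℂ) : Prop :=
  (Finset.univ.filter fun i => x i ≠ 0).card ≤ s

/-- Squared Euclidean norm. -/
def sqNorm {ι : Type*} [Fintype ι] (x : ι → ℂ) : ℝ := ∑ i, ‖x i‖ ^ 2

/-- Euclidean norm. -/
def enorm {ι : Type*} [Fintype ι] (x : ι → ℂ) : ℝ := Real.sqrt (sqNorm x)

/-- The restricted isometry constant `δ_s(A)`: the smallest `δ ≥ 0` such that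
`(1−δ)‖x‖² ≤ ‖Ax‖² ≤ (1+δ)‖x‖²` for every `s`-sparse `x`. -/
def RIPconst {m n : Type*} [Fintype m] [Fintype n] (A : Matrix m n ℂ) (s : ℕ) : ℝ :=
  sInf {δ : ℝ | 0 ≤ δ ∧ ∀ x : n → ℂ, Sparse s x →
    (1 - δ) * sqNorm x ≤ sqNorm (A.mulVec x) ∧ sqNorm (A.mulVec x) ≤ (1 + δ) * sqNorm x}

/-- `(s₁,s₂,s₃)`-hierarchical sparsity of a 3-level block vector: at most `s₁`
of the `N₁` level-1 blocks are nonzero, within each block at most `s₂` of the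
`N₂` level-2 blocks are nonzero, and each of those contains at most `s₃`
nonzero entries. -/
def HiSparse3 {N₁ N₂ N₃ : ℕ} (s₁ s₂ s₃ : ℕ) (x : Fin N₁ × Fin N₂ × Fin N₃ → ℂ) : Prop :=
  (Finset.univ.filter fun i₁ : Fin N₁ => (fun p : Fin N₂ × Fin N₃ => x (i₁, p)) ≠ 0).card ≤ s₁ ∧
  ∀ i₁ : Fin N₁,
    (Finset.univ.filter fun i₂ : Fin N₂ => (fun i₃ : Fin N₃ => x (i₁, i₂, i₃)) ≠ 0).card ≤ s₂ ∧
    ∀ i₂ : Fin N₂, Sparse s₃ (fun i₃ : Fin N₃ => x (i₁, i₂, i₃))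

/-- The hierarchical restricted isometry constant `δ_{(s₁,s₂,s₃)}(A)` of a
matrix acting on 3-level block vectors. -/
def HiRIPconst3 {m : Type*} [Fintype m] {N₁ N₂ N₃ : ℕ}
    (A : Matrix m (Fin N₁ × Fin N₂ × Fin N₃) ℂ) (s₁ s₂ s₃ : ℕ) : ℝ :=
  sInf {δ : ℝ | 0 ≤ δ ∧ ∀ x : Fin N₁ × Fin N₂ × Fin N₃ → ℂ, HiSparse3 s₁ s₂ s₃ x →
    (1 - δ) * sqNorm x ≤ sqNorm (A.mulVec x) ∧ sqNorm (A.mulVec x) ≤ (1 + δ) * sqNorm x}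

/-- `(s₁,s₂)`-hierarchical sparsity of a 2-level block vector. -/
def HiSparse2 {N₁ N₂ : ℕ} (s₁ s₂ : ℕ) (x : Fin N₁ × Fin N₂ → ℂ) : Prop :=
  (Finset.univ.filter fun i₁ : Fin N₁ => (fun i₂ : Fin N₂ => x (i₁, i₂)) ≠ 0).card ≤ s₁ ∧
  ∀ i₁ : Fin N₁, Sparse s₂ (fun i₂ : Fin N₂ => x (i₁, i₂))

/-- The 2-level hierarchical restricted isometry constant `δ_{(s₁,s₂)}(A)`. -/
def HiRIPconst2 {m : Type*} [Fintype m] {N₁ N₂ : ℕ}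
    (A : Matrix m (Fin N₁ × Fin N₂) ℂ) (s₁ s₂ : ℕ) : ℝ :=
  sInf {δ : ℝ | 0 ≤ δ ∧ ∀ x : Fin N₁ × Fin N₂ → ℂ, HiSparse2 s₁ s₂ x →
    (1 - δ) * sqNorm x ≤ sqNorm (A.mulVec x) ∧ sqNorm (A.mulVec x) ≤ (1 + δ) * sqNorm x}


/-! `A₁ ⊗ A₂ = (A₁ ⊗ 1)(1 ⊗ A₂)`. The factor `1 ⊗ A₂` applies `A₂` to every innermost block,
so it obeys the `s₃`-sparse bound of `A₂`, and it never turns a zero block into a nonzero one,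
so every column slice of its image is still `(s₁, s₂)`-Hi-sparse; `A₁ ⊗ 1` then applies `A₁` to
those slices. Two-sided isometry bounds with constants `δ₁`, `δ₂` compose to one with constant
`(1 + δ₁)(1 + δ₂) - 1`, and the infimum defining each constant is attained because the
admissible `δ` form a closed set. -/

open Matrix Kronecker

section sqNorm

variable {ι κ : Type*} [Fintype ι] [Fintype κ]

lemma sqNorm_nonneg (x : ι → ℂ) : 0 ≤ sqNorm x :=
  Finset.sum_nonneg fun _ _ => sq_nonneg _

lemma sqNorm_comp_equiv (x : ι → ℂ) (e : κ ≃ ι) : sqNorm (x ∘ e) = sqNorm x :=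
  e.sum_comp fun i => ‖x i‖ ^ 2

lemma sqNorm_eq_sum_fst (x : ι × κ → ℂ) : sqNorm x = ∑ i, sqNorm fun k => x (i, k) :=
  Fintype.sum_prod_type _

lemma sqNorm_eq_sum_snd (x : ι × κ → ℂ) : sqNorm x = ∑ k, sqNorm fun i => x (i, k) :=
  Fintype.sum_prod_type_right _

lemma sqNorm_mulVec_le {m : Type*} [Fintype m] (A : Matrix m ι ℂ) (x : ι → ℂ) :
    sqNorm (A *ᵥ x) ≤ (∑ r, ∑ j, ‖A r j‖ ^ 2) * sqNorm x := by
  rw [sqNorm, sqNorm, Finset.sum_mul]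
  refine Finset.sum_le_sum fun r _ => ?_
  calc ‖(A *ᵥ x) r‖ ^ 2 ≤ (∑ j, ‖A r j‖ * ‖x j‖) ^ 2 := by
        gcongr
        exact (norm_sum_le _ _).trans_eq (by simp only [norm_mul])
    _ ≤ (∑ j, ‖A r j‖ ^ 2) * ∑ j, ‖x j‖ ^ 2 := Finset.sum_mul_sq_le_sq_mul_sq _ _ _

end sqNorm

section kronecker

variable {l m n o : Type*} [Fintype n] [Fintype o]

lemma kronecker_one_mulVec_apply [DecidableEq o] (A : Matrix l n ℂ) (z : n × o → ℂ) (i : l)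
    (k : o) :
    (A ⊗ₖ (1 : Matrix o o ℂ) *ᵥ z) (i, k) = (A *ᵥ fun j => z (j, k)) i := by
  simp [mulVec, dotProduct, Fintype.sum_prod_type, one_apply]

lemma one_kronecker_mulVec_apply [Fintype l] [DecidableEq l] (A : Matrix m o ℂ) (z : l × o → ℂ)
    (i : l) (k : m) :
    ((1 : Matrix l l ℂ) ⊗ₖ A *ᵥ z) (i, k) = (A *ᵥ fun j => z (i, j)) k := by
  simp [mulVec, dotProduct, Fintype.sum_prod_type, one_apply]

end kronecker

section IsRIPBound

variable {m n m' n' : Type*} [Fintype m] [Fintype n] [Fintype m'] [Fintype n']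

/-- `RIPconst A s`, `HiRIPconst2 A s₁ s₂` and `HiRIPconst3 A s₁ s₂ s₃` are
`sInf {δ | IsRIPBound A P δ}` for `P` the corresponding sparsity predicate. -/
def IsRIPBound (A : Matrix m n ℂ) (P : (n → ℂ) → Prop) (δ : ℝ) : Prop :=
  0 ≤ δ ∧ ∀ x, P x →
    (1 - δ) * sqNorm x ≤ sqNorm (A *ᵥ x) ∧ sqNorm (A *ᵥ x) ≤ (1 + δ) * sqNorm x

lemma isClosed_setOf_isRIPBound (A : Matrix m n ℂ) (P : (n → ℂ) → Prop) :
    IsClosed {δ | IsRIPBound A P δ} := by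
  have hset : {δ | IsRIPBound A P δ} = Set.Ici 0 ∩ ⋂ x, ⋂ (_ : P x),
      {δ | (1 - δ) * sqNorm x ≤ sqNorm (A *ᵥ x)} ∩ {δ | sqNorm (A *ᵥ x) ≤ (1 + δ) * sqNorm x} := by
    ext δ
    simp [IsRIPBound]
  rw [hset]
  exact isClosed_Ici.inter <| isClosed_iInter fun x => isClosed_iInter fun _ =>
    (isClosed_le (by fun_prop) continuous_const).inter (isClosed_le continuous_const (by fun_prop))

lemma isRIPBound_one_add_frobenius_sq (A : Matrix m n ℂ) (P : (n → ℂ) → Prop) :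
    IsRIPBound A P (1 + ∑ r, ∑ j, ‖A r j‖ ^ 2) := by
  have hC : 0 ≤ ∑ r, ∑ j, ‖A r j‖ ^ 2 := by positivity
  refine ⟨by positivity, fun x _ => ⟨?_, ?_⟩⟩
  · nlinarith [sqNorm_nonneg (A *ᵥ x), sqNorm_nonneg x]
  · nlinarith [sqNorm_mulVec_le A x, sqNorm_nonneg x]

lemma isRIPBound_sInf (A : Matrix m n ℂ) (P : (n → ℂ) → Prop) :
    IsRIPBound A P (sInf {δ | IsRIPBound A P δ}) :=
  (isClosed_setOf_isRIPBound A P).csInf_mem ⟨_, isRIPBound_one_add_frobenius_sq A P⟩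
    ⟨0, fun _ h => h.1⟩

namespace IsRIPBound

variable {A : Matrix m n ℂ} {P : (n → ℂ) → Prop} {δ : ℝ}

lemma sInf_le (h : IsRIPBound A P δ) : sInf {δ | IsRIPBound A P δ} ≤ δ :=
  csInf_le ⟨0, fun _ h => h.1⟩ h

lemma mul {k : Type*} [Fintype k] {B : Matrix n k ℂ} {Q : (k → ℂ) → Prop} {ε : ℝ}
    (hA : IsRIPBound A P δ) (hB : IsRIPBound B Q ε) (hBP : ∀ x, Q x → P (B *ᵥ x)) :
    IsRIPBound (A * B) Q ((1 + δ) * (1 + ε) - 1) := by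
  obtain ⟨hδ, hA⟩ := hA
  obtain ⟨hε, hB⟩ := hB
  refine ⟨by nlinarith, fun x hx => ?_⟩
  obtain ⟨hBlo, hBhi⟩ := hB x hx
  obtain ⟨hAlo, hAhi⟩ := hA _ (hBP x hx)
  rw [← mulVec_mulVec]
  have hx0 := sqNorm_nonneg x
  have hABx0 := sqNorm_nonneg (A *ᵥ B *ᵥ x)
  constructor
  · -- for `δ > 1` the claimed lower bound is nonpositive
    rcases le_or_gt δ 1 with hδ1 | hδ1
    · nlinarith [mul_le_mul_of_nonneg_left hBlo (sub_nonneg.2 hδ1)]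
    · nlinarith
  · nlinarith [mul_le_mul_of_nonneg_left hBhi (by linarith : (0:ℝ) ≤ 1 + δ)]

lemma reindex (h : IsRIPBound A P δ) (e₁ : m ≃ m') (e₂ : n ≃ n') :
    IsRIPBound (reindex e₁ e₂ A) (fun x => P (x ∘ e₂)) δ := by
  refine ⟨h.1, fun x hx => ?_⟩
  rw [reindex_apply, submatrix_mulVec_equiv, Equiv.symm_symm, sqNorm_comp_equiv,
    ← sqNorm_comp_equiv x e₂]
  exact h.2 _ hx

lemma mono {Q : (n → ℂ) → Prop} (h : IsRIPBound A P δ) (hQP : ∀ x, Q x → P x) :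
    IsRIPBound A Q δ :=
  ⟨h.1, fun x hx => h.2 x (hQP x hx)⟩

lemma kronecker_one [DecidableEq n'] (h : IsRIPBound A P δ) :
    IsRIPBound (A ⊗ₖ (1 : Matrix n' n' ℂ)) (fun z => ∀ k, P fun i => z (i, k)) δ := by
  refine ⟨h.1, fun z hz => ?_⟩
  simp only [sqNorm_eq_sum_snd (_ *ᵥ z), sqNorm_eq_sum_snd z, kronecker_one_mulVec_apply,
    Finset.mul_sum]
  exact ⟨Finset.sum_le_sum fun k _ => (h.2 _ (hz k)).1,
    Finset.sum_le_sum fun k _ => (h.2 _ (hz k)).2⟩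

lemma one_kronecker [DecidableEq m'] (h : IsRIPBound A P δ) :
    IsRIPBound ((1 : Matrix m' m' ℂ) ⊗ₖ A) (fun z => ∀ i, P fun k => z (i, k)) δ := by
  refine ⟨h.1, fun z hz => ?_⟩
  simp only [sqNorm_eq_sum_fst (_ *ᵥ z), sqNorm_eq_sum_fst z, one_kronecker_mulVec_apply,
    Finset.mul_sum]
  exact ⟨Finset.sum_le_sum fun i _ => (h.2 _ (hz i)).1,
    Finset.sum_le_sum fun i _ => (h.2 _ (hz i)).2⟩

lemma kronecker {m₁ m₂ ι κ : Type*} [Fintype m₁] [Fintype m₂] [Fintype ι] [Fintype κ]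
    {A₁ : Matrix m₁ ι ℂ} {A₂ : Matrix m₂ κ ℂ} {P₁ : (ι → ℂ) → Prop} {P₂ : (κ → ℂ) → Prop}
    {P : (ι × κ → ℂ) → Prop} {δ₁ δ₂ : ℝ} (h₁ : IsRIPBound A₁ P₁ δ₁) (h₂ : IsRIPBound A₂ P₂ δ₂)
    (hP₂ : ∀ x, P x → ∀ i, P₂ fun k => x (i, k))
    (hP₁ : ∀ x, P x → ∀ r, P₁ fun i => (A₂ *ᵥ fun k => x (i, k)) r) :
    IsRIPBound (A₁ ⊗ₖ A₂) P ((1 + δ₁) * (1 + δ₂) - 1) := by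
  have hfactor : A₁ ⊗ₖ A₂ = A₁ ⊗ₖ (1 : Matrix m₂ m₂ ℂ) * (1 : Matrix ι ι ℂ) ⊗ₖ A₂ := by
    rw [← mul_kronecker_mul, Matrix.mul_one, Matrix.one_mul]
  rw [hfactor]
  refine h₁.kronecker_one.mul (h₂.one_kronecker.mono hP₂) fun x hx r => ?_
  simpa only [one_kronecker_mulVec_apply] using hP₁ x hx r

end IsRIPBound

end IsRIPBound

lemma card_filter_ne_zero_le_of {α β γ : Type*} [Fintype α] [Zero β] [Zero γ] {f : α → β}
    {g : α → γ} [DecidablePred fun a => f a ≠ 0] [DecidablePred fun a => g a ≠ 0]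
    (h : ∀ a, g a = 0 → f a = 0) :
    (Finset.univ.filter fun a => f a ≠ 0).card ≤ (Finset.univ.filter fun a => g a ≠ 0).card :=
  Finset.card_le_card fun a ha => by
    simp only [Finset.mem_filter, Finset.mem_univ, true_and] at ha ⊢
    exact mt (h a) ha

lemma HiSparse3.hiSparse2_mulVec {N₁ N₂ N₃ s₁ s₂ s₃ : ℕ} {m : Type*}
    {x : Fin N₁ × Fin N₂ × Fin N₃ → ℂ} (hx : HiSparse3 s₁ s₂ s₃ x) (B : Matrix m (Fin N₃) ℂ)
    (r : m) : HiSparse2 s₁ s₂ fun j => (B *ᵥ fun k => x (j.1, j.2, k)) r := by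
  refine ⟨(card_filter_ne_zero_le_of fun j₁ hj₁ => ?_).trans hx.1, fun j₁ =>
    (card_filter_ne_zero_le_of fun j₂ hj₂ => ?_).trans (hx.2 j₁).1⟩
  · ext j₂
    have hslice : (fun k => x (j₁, j₂, k)) = 0 := funext fun k => congrFun hj₁ (j₂, k)
    simp [hslice]
  · simp [hj₂]

theorem hiRIP_kronecker_inner_hi_general (M₁ M₂ N₁' N₂' N₃' s₁ s₂ s₃ : ℕ)
    (A₁ : Matrix (Fin M₁) (Fin N₁' × Fin N₂') ℂ) (A₂ : Matrix (Fin M₂) (Fin N₃') ℂ)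
    (A : Matrix (Fin M₁ × Fin M₂) (Fin N₁' × Fin N₂' × Fin N₃') ℂ)
    (hA : A = fun r j => A₁ r.1 (j.1, j.2.1) * A₂ r.2 j.2.2) :
    HiRIPconst3 A s₁ s₂ s₃ ≤ (1 + HiRIPconst2 A₁ s₁ s₂) * (1 + RIPconst A₂ s₃) - 1 := by
  have h₁ : IsRIPBound A₁ (HiSparse2 s₁ s₂) (HiRIPconst2 A₁ s₁ s₂) := isRIPBound_sInf _ _
  have h₂ : IsRIPBound A₂ (Sparse s₃) (RIPconst A₂ s₃) := isRIPBound_sInf _ _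
  have hreindex : A = reindex (Equiv.refl _) (Equiv.prodAssoc _ _ _) (A₁ ⊗ₖ A₂) := by
    subst hA
    rfl
  have hkron : IsRIPBound (A₁ ⊗ₖ A₂)
      (fun y => HiSparse3 s₁ s₂ s₃ (y ∘ (Equiv.prodAssoc _ _ _).symm))
      ((1 + HiRIPconst2 A₁ s₁ s₂) * (1 + RIPconst A₂ s₃) - 1) :=
    h₁.kronecker h₂ (fun _ hy i => (hy.2 i.1).2 i.2) fun _ hy r => hy.hiSparse2_mulVec A₂ r
  rw [hreindex]
  exact ((hkron.reindex _ _).mono fun x hx => by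
    rwa [Function.comp_assoc, Equiv.self_comp_symm, Function.comp_id]).sInf_le

/-- For a Kronecker product `A = A₁ ⊗ A₂` acting on 3-level
block vectors in `ℂ^{N₁'·N₂'·N₃'}` with `N₁ = N₁'N₂'` and `N₂ = N₃'`, one has
`δ_{(s₁,s₂,s₃)}(A₁ ⊗ A₂) ≤ (1 + δ_{(s₁,s₂)}(A₁))(1 + δ_{s₃}(A₂)) − 1`, where
`δ_{(s₁,s₂)}(A₁)` is the 2-level HiRIP constant of `A₁` viewed as acting on
2-level block vectors in `ℂ^{N₁'·N₂'}`. -/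
theorem hiRIP_kronecker_inner_hi (M₁ M₂ N₁' N₂' N₃' s₁ s₂ s₃ : ℕ)
    (hs₁ : 0 < s₁) (hs₂ : 0 < s₂) (hs₃ : 0 < s₃)
    (hN₁ : s₁ ≤ N₁') (hN₂ : s₂ ≤ N₂') (hN₃ : s₃ ≤ N₃')
    (A₁ : Matrix (Fin M₁) (Fin N₁' × Fin N₂') ℂ) (A₂ : Matrix (Fin M₂) (Fin N₃') ℂ)
    (A : Matrix (Fin M₁ × Fin M₂) (Fin N₁' × Fin N₂' × Fin N₃') ℂ)
    (hA : A = fun r j => A₁ r.1 (j.1, j.2.1) * A₂ r.2 j.2.2) :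
    HiRIPconst3 A s₁ s₂ s₃ ≤ (1 + HiRIPconst2 A₁ s₁ s₂) * (1 + RIPconst A₂ s₃) - 1 :=
  hiRIP_kronecker_inner_hi_general M₁ M₂ N₁' N₂' N₃' s₁ s₂ s₃ A₁ A₂ A hA
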